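/- Let U and W be ultrafilters such that for every infinite cardinal λ, either U or W is (λ, 2^λ)-indecomposable. Then the Cartesian product U × W is an ultrafilter. -/

import Mathlib

open Filter Set Cardinal

universe u v w

/-- The left tensor product `F ⋉ G` of two filters. -/
def ltimes {X : Type u} {Y : Type v} (F : Filter X) (G : Filter Y) :
    Filter (X × Y) where
  sets := {R | {x | {y | (x, y) ∈ R} ∈ G} ∈ F}
  univ_sets := by simp
  sets_of_superset := by
    intro R S hR hRS
    refine Filter.mem_of_superset hR ?_
    intro x hx
    exact Filter.mem_of_superset hx fun y hy => hRS hy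
  inter_sets := by
    intro R S hR hS
    refine Filter.mem_of_superset (Filter.inter_mem hR hS) ?_
    rintro x ⟨hx1, hx2⟩
    exact Filter.inter_mem hx1 hx2

/-- The right tensor product `F ⋊ G` of two filters. -/
def rtimes {X : Type u} {Y : Type v} (F : Filter X) (G : Filter Y) :
    Filter (X × Y) where
  sets := {R | {y | {x | (x, y) ∈ R} ∈ F} ∈ G}
  univ_sets := by simp
  sets_of_superset := by
    intro R S hR hRS
    refine Filter.mem_of_superset hR ?_
    intro y hy
    exact Filter.mem_of_superset hy fun x hx => hRS hx
  inter_sets := by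
    intro R S hR hS
    refine Filter.mem_of_superset (Filter.inter_mem hR hS) ?_
    rintro y ⟨hy1, hy2⟩
    exact Filter.inter_mem hy1 hy2

/-- `IsFClosed F G` means: `G` is `F`-closed. -/
def IsFClosed {X : Type u} {Y : Type v} (F : Filter X) (G : Filter Y) : Prop :=
  ∀ B : X → Set Y, (∀ x, B x ∈ G) → ∃ A ∈ F, (⋂ x ∈ A, B x) ∈ G

/-- `IsRegularFor F G` means: `F` is `G`-regular. -/
def IsRegularFor {X : Type u} {Y : Type v} (F : Filter X) (G : Filter Y) : Prop :=
  ∃ A : Y → Set X, (∀ y, A y ∈ F) ∧ ∀ B : Set Y, Bᶜ ∉ G → (⋂ y ∈ B, A y) = ∅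

/-- The Katetov order on filters: `G ≤kat H` iff some pushforward of `H` extends `G`. -/
def Katetov {Y : Type u} {Z : Type v} (G : Filter Y) (H : Filter Z) : Prop :=
  ∃ f : Z → Y, Filter.map f H ≤ G

/-- A filter is an ultrafilter. -/
def IsUltra {α : Type u} (F : Filter α) : Prop :=
  ∃ V : Ultrafilter α, (V : Filter α) = F

/-- `(λ, η)`-indecomposability of a filter. -/
def Indecomposable {X : Type u} (F : Filter X) (lam eta : Cardinal.{u}) : Prop :=
  ∀ P : Set (Set X), #P ≤ eta → ⋃₀ P ∈ F →
    ∃ Q ⊆ P, #Q < lam ∧ ⋃₀ Q ∈ F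

/-- `λ`-decomposability: the negation of `(λ, λ)`-indecomposability. -/
def Decomposable {X : Type u} (F : Filter X) (lam : Cardinal.{u}) : Prop :=
  ¬ Indecomposable F lam lam

/-- `(κ, δ)`-regularity of a filter. -/
def CardRegular {X : Type u} (F : Filter X) (kappa delta : Cardinal.{u}) : Prop :=
  ∃ B : delta.out → Set X, (∀ α, B α ∈ F) ∧
    ∀ σ : Set delta.out, kappa ≤ #σ → (⋂ α ∈ σ, B α) = ∅

/-- The Fréchet filter `F_λ(λ)`: subsets of (a set of size) `λ` whose complement
has cardinality less than `λ`. -/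
def frechetFilter (lam : Cardinal.{u}) (h : ℵ₀ ≤ lam) : Filter lam.out where
  sets := {A | #(Aᶜ : Set lam.out) < lam}
  univ_sets := by
    have : #((Set.univ : Set lam.out)ᶜ : Set lam.out) = 0 := by simp
    simp only [Set.mem_setOf_eq, this]
    exact lt_of_lt_of_le aleph0_pos h
  sets_of_superset := by
    intro A B hA hAB
    exact lt_of_le_of_lt (Cardinal.mk_le_mk_of_subset (Set.compl_subset_compl.mpr hAB)) hA
  inter_sets := by
    intro A B hA hB
    simp only [Set.mem_setOf_eq, Set.compl_inter]
    exact lt_of_le_of_lt (Cardinal.mk_union_le _ _) (Cardinal.add_lt_of_lt h hA hB)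

/-- The dual of a filter `F` on `X`: the family of complements of members of `F`. -/
def dualFamily {X : Type u} (F : Filter X) : Set (Set X) := {s | sᶜ ∈ F}

/-- The fine filter `𝔽(F)` on the dual of `F`, generated by the sets
`{σ ∈ F* | x ∈ σ}` for `x ∈ X`. -/
def fineFilter {X : Type u} (F : Filter X) : Filter (dualFamily F) :=
  Filter.generate (Set.range fun x : X => {σ : dualFamily F | x ∈ σ.1})

/-!
It suffices that `W` is `U`-closed: for `B : X → Set Y` with every `B x ∈ W` there is `A ∈ U`
with `⋂ x ∈ A, B x ∈ W`. Then every set in `U ⋉ W` contains a rectangle, so `U × W` is the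
ultrafilter `U ⋉ W`.

Suppose `W` is not `U`-closed. Choose `A ∈ U`, `G ∈ W` minimising the number `ρ` of row traces
`B x ∩ G` (`x ∈ A`), then `G₁ ⊆ G` in `W` minimising the number `ι` of column traces
`{x ∈ A | y ∈ B x}` (`y ∈ G₁`). If `ι` were finite, one column trace would occur on a set in `W`,
and that set lies inside every `B x`. So `ι` is infinite, and since each number of traces is at
most two to the power of the other, both are at most `2 ^ λ` for the infinite cardinal
`λ = min ι ρ`. Whichever of `U`, `W` is `(λ, 2 ^ λ)`-indecomposable shrinks `A`, resp. `G₁`,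
to a set with fewer than `λ` traces, against minimality.
-/

section Traces

variable {X Y : Type u}

def traces (r : X → Y → Prop) (A : Set X) (G : Set Y) : Set (Set Y) :=
  (fun x => {y ∈ G | r x y}) '' A

theorem card_traces_mono_right (r : X → Y → Prop) (A : Set X) {G G' : Set Y} (hG : G' ⊆ G) :
    #(traces r A G') ≤ #(traces r A G) := by
  have : traces r A G' = (· ∩ G') '' traces r A G := by
    rw [traces, traces, image_image]
    refine image_congr fun x _ => ?_
    ext y
    exact ⟨fun h => ⟨⟨hG h.1, h.2⟩, h.1⟩, fun h => ⟨h.2, h.1.2⟩⟩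
  rw [this]
  exact mk_image_le

-- A column trace is determined by the set of row traces that contain its point.
theorem card_traces_flip_le (r : X → Y → Prop) (A : Set X) (G : Set Y) :
    #(traces (flip r) G A) ≤ 2 ^ #(traces r A G) := by
  set T := traces r A G
  have hsub : traces (flip r) G A ⊆
      range fun S : Set T => {x ∈ A | ∃ t ∈ S, (t : Set Y) = {y ∈ G | r x y}} := by
    rintro _ ⟨y, hy, rfl⟩
    refine ⟨{t : T | y ∈ (t : Set Y)}, ?_⟩
    ext x
    constructor
    · rintro ⟨hx, t, hyt, htx⟩
      exact ⟨hx, (htx ▸ hyt : y ∈ {y ∈ G | r x y}).2⟩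
    · rintro ⟨hx, hxy⟩
      exact ⟨hx, ⟨_, x, hx, rfl⟩, ⟨hy, hxy⟩, rfl⟩
  calc #(traces (flip r) G A) ≤ #(Set T) := (mk_le_mk_of_subset hsub).trans mk_range_le
    _ = 2 ^ #T := mk_set

end Traces

theorem Indecomposable.exists_subset_mem_card_image_lt {X Z : Type u} {F : Filter X}
    {lam eta : Cardinal.{u}} (hF : Indecomposable F lam eta) {A : Set X} (hA : A ∈ F)
    (f : X → Z) (hf : #(f '' A) ≤ eta) : ∃ A' ⊆ A, A' ∈ F ∧ #(f '' A') < lam := by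
  set fiber : Z → Set X := fun z => A ∩ f ⁻¹' {z}
  have hA_eq : ⋃₀ (fiber '' (f '' A)) = A := by
    ext x
    simp only [sUnion_image, mem_iUnion₂, fiber]
    exact ⟨fun ⟨_, _, hx, _⟩ => hx, fun hx => ⟨f x, mem_image_of_mem f hx, hx, rfl⟩⟩
  obtain ⟨Q, hQ, hQlam, hQF⟩ :=
    hF _ (mk_image_le.trans hf) (hA_eq.symm ▸ hA)
  obtain ⟨S, hS, hSinj, rfl⟩ :=
    (show SurjOn fiber (f '' A) Q from hQ).exists_subset_injOn_image_eq
  refine ⟨_, ?_, hQF, lt_of_le_of_lt ?_ hQlam⟩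
  · exact hA_eq ▸ sUnion_mono (image_mono hS)
  · rw [mk_image_eq_of_injOn _ _ hSinj]
    refine mk_le_mk_of_subset ?_
    rintro _ ⟨x, hx, rfl⟩
    simp only [sUnion_image, mem_iUnion₂, fiber] at hx
    obtain ⟨z, hz, -, rfl⟩ := hx
    exact hz

theorem Ultrafilter.exists_mem_forall_of_finite_traces {X Y : Type u} {W : Ultrafilter Y}
    {r : X → Y → Prop} {A : Set X} (hr : ∀ x ∈ A, {y | r x y} ∈ W) {G : Set Y} (hG : G ∈ W)
    (hfin : (traces (flip r) G A).Finite) : ∃ G' ∈ W, ∀ x ∈ A, ∀ y ∈ G', r x y := by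
  set col : Y → Set X := fun y => {x ∈ A | r x y}
  obtain ⟨s, -, hs⟩ := (W.map col).eq_pure_of_finite_mem hfin (image_mem_map hG)
  have hcol : col ⁻¹' {s} ∈ W := by
    rw [← Ultrafilter.mem_map, hs]
    exact rfl
  refine ⟨_, hcol, fun x hx y hy => ?_⟩
  obtain ⟨y₀, hy₀, hy₀s⟩ := W.nonempty_of_mem (inter_mem (hr x hx) hcol)
  have : x ∈ col y := by
    rw [show col y = s from hy, ← show col y₀ = s from hy₀s]
    exact ⟨hx, hy₀⟩
  exact this.2

theorem mem_ltimes {X : Type u} {Y : Type v} {F : Filter X} {G : Filter Y} {R : Set (X × Y)} :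
    R ∈ ltimes F G ↔ {x | {y | (x, y) ∈ R} ∈ G} ∈ F :=
  Iff.rfl

theorem ltimes_eq_bind {X : Type u} {Y : Type v} (U : Ultrafilter X) (W : Ultrafilter Y) :
    ltimes (U : Filter X) (W : Filter Y) = ↑(U.bind fun x => W.map (Prod.mk x)) := by
  ext R
  rfl

theorem IsFClosed.prod_le_ltimes {X : Type u} {Y : Type v} {F : Filter X} {G : Filter Y}
    (h : IsFClosed F G) : F ×ˢ G ≤ ltimes F G := by
  intro R hR
  set A₀ := {x | {y | (x, y) ∈ R} ∈ G}
  obtain ⟨A, hA, hAG⟩ := h (fun x => {y | x ∈ A₀ → (x, y) ∈ R}) fun x => by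
    by_cases hx : x ∈ A₀
    · exact mem_of_superset hx fun _ hy _ => hy
    · exact mem_of_superset univ_mem fun _ _ hx' => absurd hx' hx
  refine mem_prod_iff.mpr ⟨A ∩ A₀, inter_mem hA (mem_ltimes.mp hR), _, hAG, ?_⟩
  rintro ⟨x, y⟩ ⟨⟨hxA, hx₀⟩, hy⟩
  exact mem_iInter₂.mp hy x hxA hx₀

theorem isFClosed_of_indecomposable {X Y : Type u} {U : Ultrafilter X} {W : Ultrafilter Y}
    (h : ∀ lam : Cardinal.{u}, ℵ₀ ≤ lam →
      Indecomposable (U : Filter X) lam (2 ^ lam) ∨ Indecomposable (W : Filter Y) lam (2 ^ lam)) :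
    IsFClosed (U : Filter X) (W : Filter Y) := by
  intro B hB
  by_contra! hB'
  set r : X → Y → Prop := fun x y => y ∈ B x
  obtain ⟨⟨A, G⟩, ⟨hA, hG⟩, hρ⟩ :=
    (InvImage.wf (fun p : Set X × Set Y => #(traces r p.1 p.2)) wellFounded_lt).has_min
      {p | p.1 ∈ U ∧ p.2 ∈ W} ⟨(univ, univ), univ_mem, univ_mem⟩
  obtain ⟨G₁, ⟨hG₁, hG₁G⟩, hι⟩ :=
    (InvImage.wf (fun G' => #(traces (flip r) G' A)) wellFounded_lt).has_min
      {G' | G' ∈ W ∧ G' ⊆ G} ⟨G, hG, subset_rfl⟩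
  set ρ := #(traces r A G)
  set ι := #(traces (flip r) G₁ A)
  have hι_inf : ℵ₀ ≤ ι := by
    by_contra! hfin
    obtain ⟨G', hG', hrect⟩ := W.exists_mem_forall_of_finite_traces (fun x _ => hB x) hG₁
      (lt_aleph0_iff_set_finite.mp hfin)
    exact hB' A hA (mem_of_superset hG' fun y hy => mem_iInter₂.mpr fun x hx => hrect x hx y hy)
  have hρ₁ : #(traces r A G₁) ≤ ρ := card_traces_mono_right r A hG₁G
  have hι_le : ι ≤ 2 ^ ρ :=
    (card_traces_flip_le r A G₁).trans (power_le_power_left two_ne_zero hρ₁)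
  have hρ_inf : ℵ₀ ≤ ρ := by
    by_contra! hfin
    exact (hι_inf.trans hι_le).not_gt (power_lt_aleph0 ofNat_lt_aleph0 hfin)
  have hι_le' : ι ≤ 2 ^ min ι ρ := by
    rcases min_choice ι ρ with hm | hm <;> rw [hm]
    exacts [(cantor ι).le, hι_le]
  have hρ_le' : #(traces r A G₁) ≤ 2 ^ min ι ρ := by
    rcases min_choice ι ρ with hm | hm <;> rw [hm]
    exacts [card_traces_flip_le (flip r) G₁ A, hρ₁.trans (cantor ρ).le]
  rcases h (min ι ρ) (le_min hι_inf hρ_inf) with hU | hW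
  · obtain ⟨A', -, hA', hA'_lt⟩ := hU.exists_subset_mem_card_image_lt hA _ hρ_le'
    exact hρ (A', G₁) ⟨hA', hG₁⟩ (hA'_lt.trans_le (min_le_right ι ρ))
  · obtain ⟨G₂, hG₂G₁, hG₂, hG₂_lt⟩ := hW.exists_subset_mem_card_image_lt hG₁ _ hι_le'
    exact hι G₂ ⟨hG₂, hG₂G₁.trans hG₁G⟩ (hG₂_lt.trans_le (min_le_left ι ρ))

theorem prod_ultrafilter_of_indecomposable {X Y : Type u}
    (U : Ultrafilter X) (W : Ultrafilter Y)
    (h : ∀ lam : Cardinal.{u}, ℵ₀ ≤ lam →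
      Indecomposable (U : Filter X) lam (2 ^ lam) ∨
        Indecomposable (W : Filter Y) lam (2 ^ lam)) :
    IsUltra ((U : Filter X) ×ˢ (W : Filter Y)) := by
  refine ⟨U.bind fun x => W.map (Prod.mk x), (Ultrafilter.unique _ ?_).symm⟩
  exact ltimes_eq_bind U W ▸ (isFClosed_of_indecomposable h).prod_le_ltimes
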